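/- Conservation of mass and uniform energy bounds for the semi-discretization (Lemma 4.4): Let (ρ_h, m_h) be a semi-discrete solution on [0,T] with initial data (ρ_{0,h}, m_{0,h}) = (ρ_h(0), m_h(0)). Then for every t ∈ [0,T]: Σ_e ∫_0^{ℓ_e} ρ_h(t,x) dx = Σ_e ∫_0^{ℓ_e} ρ_{0,h}(x) dx, and Σ_e ∫_0^{ℓ_e} ( m_h(t,x)²/(2ρ_h(t,x)) + P(ρ_h(t,x)) ) dx + ∫_0^t Σ_e ∫_0^{ℓ_e} ( a_e |∂_x m_h(s,x)|²/ρ_h(s,x)² + b_e |m_h(s,x)|³/ρ_h(s,x)² ) dx ds = Σ_e ∫_0^{ℓ_e} ( m_{0,h}(x)²/(2ρ_{0,h}(x)) + P(ρ_{0,h}(x)) ) dx, where P = P_e on edge e. -/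

import Mathlib

/-- The network pairing `(u, w)_E = Σ_{e∈E} ∫_0^{ℓ_e} u_e w_e dx` of two families of
functions on the edges of a pipe network. -/
noncomputable def pairE {E : Type} [Fintype E] (ℓ : E → ℝ) (u w : E → ℝ → ℝ) : ℝ :=
  ∑ e, ∫ x in (0 : ℝ)..(ℓ e), u e x * w e x

/-- `q` is piecewise constant on the uniform mesh of `[0, ℓ e]` into `N e` subintervals,
for every edge `e`.  This is the space `Q_h` of the mixed finite element method
(the value at the right endpoint `ℓ e` is irrelevant). -/
def IsPwConst {E : Type} (N : E → ℕ) (ℓ : E → ℝ) (q : E → ℝ → ℝ) : Prop :=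
  ∀ e, ∀ i : ℕ, i < N e →
    ∀ x ∈ Set.Ico ((i : ℝ) * ℓ e / (N e : ℝ)) (((i : ℝ) + 1) * ℓ e / (N e : ℝ)),
      q e x = q e ((i : ℝ) * ℓ e / (N e : ℝ))

/-- `v` is continuous on `[0, ℓ e]` and affine on each subinterval of the uniform mesh
of `[0, ℓ e]` into `N e` subintervals, for every edge `e`. -/
def IsPwAffine {E : Type} (N : E → ℕ) (ℓ : E → ℝ) (v : E → ℝ → ℝ) : Prop :=
  (∀ e, ContinuousOn (v e) (Set.Icc 0 (ℓ e))) ∧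
  (∀ e, ∀ i : ℕ, i < N e → ∃ α β : ℝ,
    ∀ x ∈ Set.Icc ((i : ℝ) * ℓ e / (N e : ℝ)) (((i : ℝ) + 1) * ℓ e / (N e : ℝ)),
      v e x = α * x + β)

/-- The vertex sum `Σ_{e∈E(w)} f_e(w) n_e(w)` at a vertex `w`, where `n_e(w) = -1` if
`w` is the initial vertex `src e`, `n_e(w) = +1` if `w` is the terminal vertex `dst e`,
and a function `f_e` is evaluated at `src e` as `f e 0` and at `dst e` as `f e (ℓ e)`. -/
noncomputable def vtxSum {V E : Type} [Fintype E] [DecidableEq V]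
    (src dst : E → V) (ℓ : E → ℝ) (f : E → ℝ → ℝ) (w : V) : ℝ :=
  ∑ e, ((if dst e = w then f e (ℓ e) else 0) - (if src e = w then f e 0 else 0))

/-- The space `V_h`: continuous piecewise affine families that satisfy the conservative
coupling condition `Σ_{e∈E(w)} v_e(w) n_e(w) = 0` at every vertex `w`. -/
def InVh {V E : Type} [Fintype E] [DecidableEq V]
    (src dst : E → V) (N : E → ℕ) (ℓ : E → ℝ) (v : E → ℝ → ℝ) : Prop :=
  IsPwAffine N ℓ v ∧ ∀ w : V, vtxSum src dst ℓ v w = 0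

/-- The subinterval-wise (broken) spatial derivative of a piecewise affine family `v`:
on the subinterval of the mesh containing `x`, it is the slope of `v e` there. -/
noncomputable def Dx {E : Type} (N : E → ℕ) (ℓ : E → ℝ) (v : E → ℝ → ℝ)
    (e : E) (x : ℝ) : ℝ :=
  let i : ℕ := min (N e - 1) ⌊x * (N e : ℝ) / ℓ e⌋₊
  (v e (((i : ℝ) + 1) * ℓ e / (N e : ℝ)) - v e ((i : ℝ) * ℓ e / (N e : ℝ)))
    * ((N e : ℝ) / ℓ e)

/-- The two variational equations of the semi-discrete (Galerkin) problem
(Problem 4.2) at a fixed time, for state `(ρ, m)` with time derivatives `(ρt, mt)`: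
for all `q_h ∈ Q_h` and all `v_h ∈ V_h`,
`(∂ₜ ρ_h, q_h)_E = -(∂ₓ m_h, q_h)_E` and
`((1/ρ_h) ∂ₜ m_h - (m_h/(2ρ_h²)) ∂ₜ ρ_h, v_h)_E
   = ( m_h²/(2ρ_h²) + P'(ρ_h) - (a/ρ_h²) ∂ₓ m_h, ∂ₓ v_h )_E
     - ( (m_h/(2ρ_h²)) ∂ₓ m_h + b |m_h| m_h/ρ_h², v_h )_E`,
with `P_e'(ρ) = c_e γ/(γ-1) ρ^(γ-1)` on edge `e`. -/
def SemiDiscEqs {V E : Type} [Fintype V] [Fintype E] [DecidableEq V]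
    (src dst : E → V) (N : E → ℕ) (ℓ : E → ℝ) (γ : ℝ) (a b c : E → ℝ)
    (ρ m ρt mt : E → ℝ → ℝ) : Prop :=
  (∀ q : E → ℝ → ℝ, IsPwConst N ℓ q →
      pairE ℓ ρt q = -pairE ℓ (Dx N ℓ m) q) ∧
  (∀ v : E → ℝ → ℝ, InVh src dst N ℓ v →
      pairE ℓ (fun e x => (1 / ρ e x) * mt e x - m e x / (2 * ρ e x ^ 2) * ρt e x) v
        = pairE ℓ (fun e x => m e x ^ 2 / (2 * ρ e x ^ 2)
              + c e * γ / (γ - 1) * ρ e x ^ (γ - 1)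
              - a e / ρ e x ^ 2 * Dx N ℓ m e x) (Dx N ℓ v)
          - pairE ℓ (fun e x => m e x / (2 * ρ e x ^ 2) * Dx N ℓ m e x
              + b e * |m e x| * m e x / ρ e x ^ 2) v)

/-- A semi-discrete solution of the Galerkin approximation on the time set `S`:
a continuously differentiable map `t ↦ (ρh t, mh t) ∈ Q_h × V_h` (with time
derivatives `ρht`, `mht`) with everywhere positive density, satisfying the
semi-discrete variational equations for every `t ∈ S`. -/
def IsSemiDiscSol {V E : Type} [Fintype V] [Fintype E] [DecidableEq V]
    (src dst : E → V) (N : E → ℕ) (ℓ : E → ℝ) (γ : ℝ) (a b c : E → ℝ)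
    (S : Set ℝ) (ρh mh ρht mht : ℝ → E → ℝ → ℝ) : Prop :=
  (∀ t ∈ S, IsPwConst N ℓ (ρh t) ∧ InVh src dst N ℓ (mh t)) ∧
  (∀ t ∈ S, ∀ e, ∀ x ∈ Set.Icc 0 (ℓ e), 0 < ρh t e x) ∧
  (∀ t ∈ S, ∀ e x,
      HasDerivWithinAt (fun s => ρh s e x) (ρht t e x) S t ∧
      HasDerivWithinAt (fun s => mh s e x) (mht t e x) S t) ∧
  (∀ e x, ContinuousOn (fun t => ρht t e x) S) ∧
  (∀ e x, ContinuousOn (fun t => mht t e x) S) ∧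
  (∀ t ∈ S, SemiDiscEqs src dst N ℓ γ a b c (ρh t) (mh t) (ρht t) (mht t))

/-!
Testing the mass equation with `q = 1` shows that the mass changes at the rate
`-Σ_e (m_e(ℓ_e) - m_e(0))`, which the coupling conditions at the vertices make vanish.
Testing the momentum equation with `v = m_h` and the mass equation with `q = P'(ρ_h)` (a legitimate
test function because `ρ_h` is piecewise constant), the convective and pressure terms cancel and
the energy is seen to decrease at exactly the rate of the dissipation. Differentiating the energy
under the integral sign is justified cellwise: on each cell the energy density is a quadratic
polynomial in `x`, and Simpson's rule is exact on quadratics, so the cell integral is a fixed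
combination of three point values. Finally the dissipation is nonnegative, hence integrable in
time, and the fundamental theorem of calculus turns the rate identity into the energy balance.
-/

open MeasureTheory Set intervalIntegral

def IsQuadraticOn (f : ℝ → ℝ) (s : Set ℝ) : Prop :=
  ∃ α β γ : ℝ, ∀ x ∈ s, f x = α * x ^ 2 + β * x + γ

namespace IsQuadraticOn

variable {f : ℝ → ℝ} {s : Set ℝ} {p q : ℝ}

lemma const (s : Set ℝ) (k : ℝ) : IsQuadraticOn (fun _ => k) s :=
  ⟨0, 0, k, fun _ _ => by ring⟩

lemma continuousOn (hf : IsQuadraticOn f s) : ContinuousOn f s := by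
  obtain ⟨α, β, γ, h⟩ := hf
  exact (by fun_prop : Continuous fun x : ℝ => α * x ^ 2 + β * x + γ).continuousOn.congr h

lemma integral_eq_simpson (hpq : p ≤ q) (hf : IsQuadraticOn f (Icc p q)) :
    ∫ x in p..q, f x = (q - p) / 6 * (f p + 4 * f ((p + q) / 2) + f q) := by
  obtain ⟨α, β, γ, h⟩ := hf
  have hmid : (p + q) / 2 ∈ Icc p q := ⟨by linarith, by linarith⟩
  rw [integral_congr (fun x hx => h x (uIcc_of_le hpq ▸ hx)), h p (left_mem_Icc.2 hpq),
    h q (right_mem_Icc.2 hpq), h _ hmid, intervalIntegral.integral_add,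
    intervalIntegral.integral_add, intervalIntegral.integral_const_mul,
    intervalIntegral.integral_const_mul]
  · simp only [integral_pow, integral_id, intervalIntegral.integral_const, smul_eq_mul]
    ring
  all_goals exact (by fun_prop : Continuous _).intervalIntegrable _ _

lemma eq_lagrange (hpq : p < q) (hf : IsQuadraticOn f (Icc p q)) :
    ∀ x ∈ Icc p q, f x = f p * ((1 - (x - p) / (q - p)) * (1 - 2 * ((x - p) / (q - p))))
      + f ((p + q) / 2) * (4 * ((x - p) / (q - p)) * (1 - (x - p) / (q - p)))
      + f q * ((x - p) / (q - p) * (2 * ((x - p) / (q - p)) - 1)) := by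
  obtain ⟨α, β, γ, h⟩ := hf
  intro x hx
  have hmid : (p + q) / 2 ∈ Icc p q := ⟨by linarith, by linarith⟩
  have hqp : q - p ≠ 0 := sub_ne_zero.2 hpq.ne'
  rw [h x hx, h p (left_mem_Icc.2 hpq.le), h q (right_mem_Icc.2 hpq.le), h _ hmid]
  field_simp
  ring

lemma of_eq_lagrange (y₀ y₁ y₂ : ℝ)
    (hf : ∀ x ∈ s, f x = y₀ * ((1 - (x - p) / (q - p)) * (1 - 2 * ((x - p) / (q - p))))
      + y₁ * (4 * ((x - p) / (q - p)) * (1 - (x - p) / (q - p)))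
      + y₂ * ((x - p) / (q - p) * (2 * ((x - p) / (q - p)) - 1))) :
    IsQuadraticOn f s :=
  ⟨2 * (y₀ - 2 * y₁ + y₂) / (q - p) / (q - p),
    (4 * y₁ - 3 * y₀ - y₂) / (q - p) - 4 * (y₀ - 2 * y₁ + y₂) * p / (q - p) / (q - p),
    y₀ - (4 * y₁ - 3 * y₀ - y₂) * p / (q - p) + 2 * (y₀ - 2 * y₁ + y₂) * p ^ 2 / (q - p) / (q - p),
    fun x hx => by rw [hf x hx]; ring⟩

/-- `F' x` is the derivative of the Lagrange form of `F s x`, which is linear in the three nodal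
values. -/
lemma of_hasDerivWithinAt {F : ℝ → ℝ → ℝ} {F' : ℝ → ℝ} {S : Set ℝ} {t : ℝ} (hpq : p < q)
    (hS : UniqueDiffWithinAt ℝ S t) (ht : t ∈ S) (hF : ∀ s ∈ S, IsQuadraticOn (F s) (Icc p q))
    (hF' : ∀ x ∈ Icc p q, HasDerivWithinAt (fun s => F s x) (F' x) S t) :
    IsQuadraticOn F' (Icc p q) := by
  have hmid : (p + q) / 2 ∈ Icc p q := ⟨by linarith, by linarith⟩
  refine of_eq_lagrange (p := p) (q := q) (F' p) (F' ((p + q) / 2)) (F' q) fun x hx => ?_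
  refine hS.eq_deriv _ (hF' x hx) <| HasDerivWithinAt.congr_of_mem ?_
    (fun s hs => (hF s hs).eq_lagrange hpq x hx) ht
  exact (((hF' p (left_mem_Icc.2 hpq.le)).mul_const _).add ((hF' _ hmid).mul_const _)).add
    ((hF' q (right_mem_Icc.2 hpq.le)).mul_const _)

end IsQuadraticOn

/-- Simpson's rule is exact on quadratics, so the integral is a fixed combination of three point
values. -/
lemma hasDerivWithinAt_integral_of_isQuadraticOn {F : ℝ → ℝ → ℝ} {F' : ℝ → ℝ} {S : Set ℝ}
    {t p q : ℝ} (hpq : p < q) (hS : UniqueDiffWithinAt ℝ S t) (ht : t ∈ S)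
    (hF : ∀ s ∈ S, IsQuadraticOn (F s) (Icc p q))
    (hF' : ∀ x ∈ Icc p q, HasDerivWithinAt (fun s => F s x) (F' x) S t) :
    HasDerivWithinAt (fun s => ∫ x in p..q, F s x) (∫ x in p..q, F' x) S t := by
  have hmid : (p + q) / 2 ∈ Icc p q := ⟨by linarith, by linarith⟩
  rw [(IsQuadraticOn.of_hasDerivWithinAt hpq hS ht hF hF').integral_eq_simpson hpq.le]
  exact ((((hF' p (left_mem_Icc.2 hpq.le)).add ((hF' _ hmid).const_mul 4)).add
    (hF' q (right_mem_Icc.2 hpq.le))).const_mul _).congr_of_mem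
    (fun s hs => (hF s hs).integral_eq_simpson hpq.le) ht

lemma intervalIntegrable_of_eqOn_Ioo {f g : ℝ → ℝ} {p q : ℝ} (hpq : p ≤ q)
    (hg : ContinuousOn g (Icc p q)) (hfg : EqOn f g (Ioo p q)) :
    IntervalIntegrable f volume p q :=
  (hg.intervalIntegrable_of_Icc hpq).congr_uIoo (uIoo_of_le hpq ▸ hfg.symm)

/-- A nonnegative derivative is automatically integrable. -/
lemma integral_eq_sub_of_hasDerivWithinAt_of_nonneg {f f' : ℝ → ℝ} {a b : ℝ} (hab : a ≤ b)
    (hf : ∀ x ∈ Icc a b, HasDerivWithinAt f (f' x) (Icc a b) x) (hf' : ∀ x ∈ Ioo a b, 0 ≤ f' x) :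
    ∫ x in a..b, f' x = f b - f a := by
  have hcont : ContinuousOn f (Icc a b) := fun x hx => (hf x hx).continuousWithinAt
  have hderiv : ∀ x ∈ Ioo a b, HasDerivAt f (f' x) x := fun x hx =>
    (hf x (Ioo_subset_Icc_self hx)).hasDerivAt (Icc_mem_nhds hx.1 hx.2)
  exact integral_eq_sub_of_hasDerivAt_of_le hab hcont hderiv
    ((intervalIntegrable_iff_integrableOn_Ioc_of_le hab).2
      (integrableOn_deriv_of_nonneg hcont hderiv hf'))

lemma hasDerivWithinAt_energyDensity {u r : ℝ → ℝ} {u' r' : ℝ} {S : Set ℝ} {t : ℝ}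
    (hu : HasDerivWithinAt u u' S t) (hr : HasDerivWithinAt r r' S t) (hr₀ : r t ≠ 0)
    (c γ : ℝ) :
    HasDerivWithinAt (fun s => u s ^ 2 / (2 * r s) + c * r s ^ γ / (γ - 1))
      ((1 / r t * u' - u t / (2 * r t ^ 2) * r') * u t
        + r' * (c * γ / (γ - 1) * r t ^ (γ - 1))) S t := by
  have hP := (Real.hasDerivAt_rpow_const (p := γ) (Or.inl hr₀)).comp_hasDerivWithinAt t hr
  refine (((hu.pow 2).div (hr.const_mul 2) (mul_ne_zero two_ne_zero hr₀)).add
    ((hP.const_mul c).div_const (γ - 1))).congr_deriv ?_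
  simp only [Pi.pow_apply]
  field_simp
  ring

section UniformMesh

variable {n : ℕ} {L : ℝ}

lemma mesh_lt (hL : 0 < L) {i : ℕ} (hi : i < n) : (i : ℝ) * L / n < ((i : ℝ) + 1) * L / n := by
  have hn : (0 : ℝ) < n := by exact_mod_cast (Nat.zero_le i).trans_lt hi
  gcongr
  linarith

lemma mesh_mem_Icc (hL : 0 < L) {i : ℕ} (hi : i < n) : (i : ℝ) * L / n ∈ Icc 0 L := by
  have hn : (0 : ℝ) < n := by exact_mod_cast (Nat.zero_le i).trans_lt hi
  refine ⟨by positivity, div_le_of_le_mul₀ hn.le hL.le ?_⟩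
  rw [mul_comm]
  exact mul_le_mul_of_nonneg_left (by exact_mod_cast hi.le) hL.le

lemma intervalIntegrable_of_eqOn_cells (hn : n ≠ 0) (hL : 0 < L) {f : ℝ → ℝ}
    {G : ℕ → ℝ → ℝ} (hG : ∀ i < n, ContinuousOn (G i) (Icc ((i : ℝ) * L / n) ((i + 1) * L / n)))
    (hfG : ∀ i < n, EqOn f (G i) (Ioo ((i : ℝ) * L / n) ((i + 1) * L / n))) :
    IntervalIntegrable f volume 0 L := by
  have h := IntervalIntegrable.trans_iterate (a := fun k : ℕ => (k : ℝ) * L / n) (n := n)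
    (f := f) (μ := volume) fun i hi => by
      push_cast
      exact intervalIntegrable_of_eqOn_Ioo (mesh_lt hL hi).le (hG i hi) (hfG i hi)
  simpa [hn] using h

lemma integral_eq_sum_cells (hn : n ≠ 0) (hL : 0 < L) {f : ℝ → ℝ}
    {G : ℕ → ℝ → ℝ} (hG : ∀ i < n, ContinuousOn (G i) (Icc ((i : ℝ) * L / n) ((i + 1) * L / n)))
    (hfG : ∀ i < n, EqOn f (G i) (Ioo ((i : ℝ) * L / n) ((i + 1) * L / n))) :
    ∫ x in (0 : ℝ)..L, f x
      = ∑ i ∈ Finset.range n, ∫ x in ((i : ℝ) * L / n)..((i + 1) * L / n), G i x := by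
  have h := sum_integral_adjacent_intervals (a := fun k : ℕ => (k : ℝ) * L / n) (n := n)
    (f := f) (μ := volume) fun i hi => by
      push_cast
      exact intervalIntegrable_of_eqOn_Ioo (mesh_lt hL hi).le (hG i hi) (hfG i hi)
  simp only [Nat.cast_zero, Nat.cast_add, Nat.cast_one, zero_mul, zero_div,
    mul_div_cancel_left₀ _ (Nat.cast_ne_zero.2 hn : (n : ℝ) ≠ 0)] at h
  rw [← h]
  refine Finset.sum_congr rfl fun i hi => ?_
  have hi := Finset.mem_range.1 hi
  exact integral_congr_Ioo_of_le (μ := volume) (mesh_lt hL hi).le (hfG i hi)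

lemma hasDerivWithinAt_integral_of_isQuadraticOn_cells (hn : n ≠ 0) (hL : 0 < L) {S : Set ℝ}
    {t : ℝ} (hS : UniqueDiffWithinAt ℝ S t) (ht : t ∈ S) {g : ℝ → ℝ → ℝ} {g' : ℝ → ℝ}
    (F : ℕ → ℝ → ℝ → ℝ) (F' : ℕ → ℝ → ℝ)
    (hF : ∀ i < n, ∀ s ∈ S, IsQuadraticOn (F i s) (Icc ((i : ℝ) * L / n) ((i + 1) * L / n)))
    (hF' : ∀ i < n, ∀ x ∈ Icc ((i : ℝ) * L / n) ((i + 1) * L / n),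
      HasDerivWithinAt (fun s => F i s x) (F' i x) S t)
    (hg : ∀ s ∈ S, ∀ i < n, EqOn (g s) (F i s) (Ioo ((i : ℝ) * L / n) ((i + 1) * L / n)))
    (hg' : ∀ i < n, EqOn g' (F' i) (Ioo ((i : ℝ) * L / n) ((i + 1) * L / n))) :
    HasDerivWithinAt (fun s => ∫ x in (0 : ℝ)..L, g s x) (∫ x in (0 : ℝ)..L, g' x) S t := by
  have hF'quad : ∀ i < n, IsQuadraticOn (F' i) (Icc ((i : ℝ) * L / n) ((i + 1) * L / n)) :=
    fun i hi => .of_hasDerivWithinAt (mesh_lt hL hi) hS ht (hF i hi) (hF' i hi)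
  rw [integral_eq_sum_cells hn hL (fun i hi => (hF'quad i hi).continuousOn) hg']
  refine (HasDerivWithinAt.fun_sum fun i hi => ?_).congr_of_mem (fun s hs =>
    integral_eq_sum_cells hn hL (fun i hi => (hF i hi s hs).continuousOn) (hg s hs)) ht
  have hi := Finset.mem_range.1 hi
  exact hasDerivWithinAt_integral_of_isQuadraticOn (mesh_lt hL hi) hS ht (hF i hi) (hF' i hi)

/-- Every integrand of the scheme has this form, with `κ = (ρ, ∂ₜρ, ∂ₓm)` piecewise constant and
`u = (m, ∂ₜm)` continuous on each closed cell. -/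
lemma intervalIntegrable_comp_of_pwConst {X Y : Type*} [TopologicalSpace Y] (hn : n ≠ 0)
    (hL : 0 < L) (Φ : X → Y → ℝ) (hΦ : ∀ k, Continuous (Φ k)) {κ : ℝ → X} {u : ℝ → Y}
    (hκ : ∀ i < n, ∀ x ∈ Ico ((i : ℝ) * L / n) ((i + 1) * L / n), κ x = κ (i * L / n))
    (hu : ∀ i < n, ContinuousOn u (Icc ((i : ℝ) * L / n) ((i + 1) * L / n))) :
    IntervalIntegrable (fun x => Φ (κ x) (u x)) volume 0 L :=
  intervalIntegrable_of_eqOn_cells hn hL (G := fun i => Φ (κ (i * L / n)) ∘ u)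
    (fun i hi => (hΦ _).comp_continuousOn (hu i hi))
    fun i hi x hx => by simp only [Function.comp_apply, hκ i hi x (Ioo_subset_Ico_self hx)]

end UniformMesh

section Network

variable {V E : Type} {N : E → ℕ} {ℓ : E → ℝ}

lemma Dx_eq_of_mem_Ico (v : E → ℝ → ℝ) {e : E} (hℓ : 0 < ℓ e) {i : ℕ} (hi : i < N e) {x : ℝ}
    (hx : x ∈ Ico ((i : ℝ) * ℓ e / N e) ((i + 1) * ℓ e / N e)) :
    Dx N ℓ v e x = (v e ((i + 1) * ℓ e / N e) - v e (i * ℓ e / N e)) * (N e / ℓ e) := by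
  have hN : (0 : ℝ) < N e := by exact_mod_cast (Nat.zero_le i).trans_lt hi
  obtain ⟨hx₁, hx₂⟩ := hx
  have hfloor : ⌊x * N e / ℓ e⌋₊ = i := by
    have hx₀ : 0 ≤ x := le_trans (by positivity) hx₁
    rw [div_le_iff₀ hN] at hx₁
    rw [lt_div_iff₀ hN] at hx₂
    rw [Nat.floor_eq_iff (by positivity), le_div_iff₀ hℓ, div_lt_iff₀ hℓ]
    exact ⟨by linarith, by linarith⟩
  simp only [Dx, hfloor, min_eq_right (Nat.le_sub_one_of_lt hi)]

lemma isPwConst_Dx (hℓ : ∀ e, 0 < ℓ e) (v : E → ℝ → ℝ) : IsPwConst N ℓ (Dx N ℓ v) :=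
  fun e i hi x hx => by
    rw [Dx_eq_of_mem_Ico v (hℓ e) hi hx,
      Dx_eq_of_mem_Ico v (hℓ e) hi (left_mem_Ico.2 (mesh_lt (hℓ e) hi))]

lemma integral_Dx {e : E} (hN : N e ≠ 0) (hℓ : 0 < ℓ e) (v : E → ℝ → ℝ) :
    ∫ x in (0 : ℝ)..ℓ e, Dx N ℓ v e x = v e (ℓ e) - v e 0 := by
  rw [integral_eq_sum_cells hN hℓ (fun _ _ => continuousOn_const)
    fun i hi x hx => Dx_eq_of_mem_Ico v hℓ hi (Ioo_subset_Ico_self hx)]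
  have hN' : (N e : ℝ) ≠ 0 := Nat.cast_ne_zero.2 hN
  have := Finset.sum_range_sub (fun i : ℕ => v e (i * ℓ e / N e)) (N e)
  simp only [Nat.cast_add, Nat.cast_one, Nat.cast_zero, zero_mul, zero_div,
    mul_div_cancel_left₀ _ hN'] at this
  rw [← this]
  refine Finset.sum_congr rfl fun i _ => ?_
  rw [intervalIntegral.integral_const, smul_eq_mul]
  field_simp
  ring

lemma IsPwAffine.isQuadraticOn {v : E → ℝ → ℝ} (hv : IsPwAffine N ℓ v) {e : E} {i : ℕ}
    (hi : i < N e) : IsQuadraticOn (v e) (Icc ((i : ℝ) * ℓ e / N e) ((i + 1) * ℓ e / N e)) := by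
  obtain ⟨α, β, h⟩ := hv.2 e i hi
  exact ⟨0, α, β, fun x hx => by rw [h x hx]; ring⟩

lemma isPwConst_of_hasDerivWithinAt {f : ℝ → E → ℝ → ℝ} {f' : E → ℝ → ℝ} {S : Set ℝ} {t : ℝ}
    (hS : UniqueDiffWithinAt ℝ S t) (ht : t ∈ S) (hf : ∀ s ∈ S, IsPwConst N ℓ (f s))
    (hf' : ∀ e x, HasDerivWithinAt (fun s => f s e x) (f' e x) S t) : IsPwConst N ℓ f' :=
  fun e i hi x hx => hS.eq_deriv _ (hf' e x)
    ((hf' e _).congr_of_mem (fun s hs => hf s hs e i hi x hx) ht)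

lemma sum_vtxSum [Fintype V] [Fintype E] [DecidableEq V] (src dst : E → V) (f : E → ℝ → ℝ) :
    ∑ w, vtxSum src dst ℓ f w = ∑ e, (f e (ℓ e) - f e 0) := by
  simp only [vtxSum]
  rw [Finset.sum_comm]
  refine Finset.sum_congr rfl fun e _ => ?_
  simp [Finset.sum_sub_distrib]

end Network

section Energy

variable {E : Type} [Fintype E] {N : E → ℕ} {ℓ : E → ℝ}

noncomputable def totalMass (ℓ : E → ℝ) (ρ : E → ℝ → ℝ) : ℝ :=
  ∑ e, ∫ x in (0 : ℝ)..ℓ e, ρ e x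

noncomputable def energy (ℓ : E → ℝ) (γ : ℝ) (c : E → ℝ) (ρ m : E → ℝ → ℝ) : ℝ :=
  ∑ e, ∫ x in (0 : ℝ)..ℓ e, (m e x ^ 2 / (2 * ρ e x) + c e * ρ e x ^ γ / (γ - 1))

noncomputable def energyRate (ℓ : E → ℝ) (γ : ℝ) (c : E → ℝ) (ρ m ρt mt : E → ℝ → ℝ) : ℝ :=
  ∑ e, ∫ x in (0 : ℝ)..ℓ e, ((1 / ρ e x * mt e x - m e x / (2 * ρ e x ^ 2) * ρt e x) * m e x
    + ρt e x * (c e * γ / (γ - 1) * ρ e x ^ (γ - 1)))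

noncomputable def dissipation (N : E → ℕ) (ℓ : E → ℝ) (a b : E → ℝ) (ρ m : E → ℝ → ℝ) : ℝ :=
  ∑ e, ∫ x in (0 : ℝ)..ℓ e,
    (a e * Dx N ℓ m e x ^ 2 / ρ e x ^ 2 + b e * |m e x| ^ 3 / ρ e x ^ 2)

lemma dissipation_nonneg {a b : E → ℝ} (ha : ∀ e, 0 ≤ a e) (hb : ∀ e, 0 ≤ b e)
    (hℓ : ∀ e, 0 < ℓ e) (ρ m : E → ℝ → ℝ) : 0 ≤ dissipation N ℓ a b ρ m :=
  Finset.sum_nonneg fun e _ => integral_nonneg (hℓ e).le fun x _ => by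
    have := ha e
    have := hb e
    positivity

variable {S : Set ℝ} {t : ℝ}

lemma hasDerivWithinAt_totalMass {ρ : ℝ → E → ℝ → ℝ} {ρ' : E → ℝ → ℝ} (hN : ∀ e, N e ≠ 0)
    (hℓ : ∀ e, 0 < ℓ e) (hS : UniqueDiffWithinAt ℝ S t) (ht : t ∈ S)
    (hρ : ∀ s ∈ S, IsPwConst N ℓ (ρ s))
    (hρ' : ∀ e x, HasDerivWithinAt (fun s => ρ s e x) (ρ' e x) S t) :
    HasDerivWithinAt (fun s => totalMass ℓ (ρ s)) (totalMass ℓ ρ') S t := by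
  have hρ'pw := isPwConst_of_hasDerivWithinAt hS ht hρ hρ'
  refine HasDerivWithinAt.fun_sum fun e _ => ?_
  exact hasDerivWithinAt_integral_of_isQuadraticOn_cells (hN e) (hℓ e) hS ht
    (fun i s _ => ρ s e (i * ℓ e / N e)) (fun i _ => ρ' e (i * ℓ e / N e))
    (fun i _ s _ => .const _ _) (fun i _ _ _ => hρ' e _)
    (fun s hs i hi x hx => hρ s hs e i hi x (Ioo_subset_Ico_self hx))
    (fun i hi x hx => hρ'pw e i hi x (Ioo_subset_Ico_self hx))

lemma hasDerivWithinAt_energy {γ : ℝ} {c : E → ℝ} {ρ m : ℝ → E → ℝ → ℝ} {ρ' m' : E → ℝ → ℝ}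
    (hN : ∀ e, N e ≠ 0) (hℓ : ∀ e, 0 < ℓ e) (hS : UniqueDiffWithinAt ℝ S t) (ht : t ∈ S)
    (hρ : ∀ s ∈ S, IsPwConst N ℓ (ρ s)) (hm : ∀ s ∈ S, IsPwAffine N ℓ (m s))
    (hpos : ∀ e, ∀ x ∈ Icc 0 (ℓ e), 0 < ρ t e x)
    (hρ' : ∀ e x, HasDerivWithinAt (fun s => ρ s e x) (ρ' e x) S t)
    (hm' : ∀ e x, HasDerivWithinAt (fun s => m s e x) (m' e x) S t) :
    HasDerivWithinAt (fun s => energy ℓ γ c (ρ s) (m s)) (energyRate ℓ γ c (ρ t) (m t) ρ' m')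
      S t := by
  have hρ'pw := isPwConst_of_hasDerivWithinAt hS ht hρ hρ'
  refine HasDerivWithinAt.fun_sum fun e _ => ?_
  -- On cell `i`, freeze `ρ` at the left node; this changes the integrands only at the right end.
  refine hasDerivWithinAt_integral_of_isQuadraticOn_cells (hN e) (hℓ e) hS ht
    (fun i s x => m s e x ^ 2 / (2 * ρ s e (i * ℓ e / N e))
      + c e * ρ s e (i * ℓ e / N e) ^ γ / (γ - 1))
    (fun i x => (1 / ρ t e (i * ℓ e / N e) * m' e x
        - m t e x / (2 * ρ t e (i * ℓ e / N e) ^ 2) * ρ' e (i * ℓ e / N e)) * m t e x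
      + ρ' e (i * ℓ e / N e) * (c e * γ / (γ - 1) * ρ t e (i * ℓ e / N e) ^ (γ - 1)))
    (fun i hi s hs => ?_) (fun i hi x _ => ?_) (fun s hs i hi x hx => ?_) (fun i hi x hx => ?_)
  · obtain ⟨α, β, h⟩ := (hm s hs).2 e i hi
    set R := 2 * ρ s e (i * ℓ e / N e)
    exact ⟨α ^ 2 / R, 2 * α * β / R, β ^ 2 / R + c e * ρ s e (i * ℓ e / N e) ^ γ / (γ - 1),
      fun x hx => by beta_reduce; rw [h x hx]; ring⟩
  · exact hasDerivWithinAt_energyDensity (hm' e x) (hρ' e _)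
      (hpos e _ (mesh_mem_Icc (hℓ e) hi)).ne' _ _
  · simp only [hρ s hs e i hi x (Ioo_subset_Ico_self hx)]
  · simp only [hρ t ht e i hi x (Ioo_subset_Ico_self hx), hρ'pw e i hi x (Ioo_subset_Ico_self hx)]

end Energy

namespace SemiDiscEqs

variable {V E : Type} [Fintype V] [Fintype E] [DecidableEq V] {src dst : E → V} {N : E → ℕ}
  {ℓ : E → ℝ} {γ : ℝ} {a b c : E → ℝ} {ρ m ρt mt : E → ℝ → ℝ}

lemma totalMass_eq_zero (hN : ∀ e, N e ≠ 0) (hℓ : ∀ e, 0 < ℓ e)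
    (hm : InVh src dst N ℓ m) (heq : SemiDiscEqs src dst N ℓ γ a b c ρ m ρt mt) :
    totalMass ℓ ρt = 0 := by
  have hmass := heq.1 (fun _ _ => 1) fun _ _ _ _ _ => rfl
  simp only [pairE, mul_one] at hmass
  rw [totalMass, hmass, Finset.sum_congr rfl fun e _ => integral_Dx (hN e) (hℓ e) m,
    ← sum_vtxSum src dst, Finset.sum_eq_zero fun w _ => hm.2 w, neg_zero]

lemma energyRate_eq (hN : ∀ e, N e ≠ 0) (hℓ : ∀ e, 0 < ℓ e) (hρ : IsPwConst N ℓ ρ)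
    (hρt : IsPwConst N ℓ ρt) (hm : InVh src dst N ℓ m)
    (hmt : ∀ e, ∀ i < N e, ContinuousOn (mt e) (Icc ((i : ℝ) * ℓ e / N e) ((i + 1) * ℓ e / N e)))
    (heq : SemiDiscEqs src dst N ℓ γ a b c ρ m ρt mt) :
    energyRate ℓ γ c ρ m ρt mt = -dissipation N ℓ a b ρ m := by
  have hmom := heq.2 m hm
  have hmass := heq.1 (fun e x => c e * γ / (γ - 1) * ρ e x ^ (γ - 1))
    fun e i hi x hx => by simp only [hρ e i hi x hx]
  simp only [pairE] at hmom hmass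
  have hint : ∀ e (Φ : ℝ × ℝ × ℝ → ℝ × ℝ → ℝ), (∀ k, Continuous (Φ k)) →
      IntervalIntegrable (fun x => Φ (ρ e x, ρt e x, Dx N ℓ m e x) (m e x, mt e x))
        volume 0 (ℓ e) :=
    fun e Φ hΦ => intervalIntegrable_comp_of_pwConst (hN e) (hℓ e) Φ hΦ
      (fun i hi x hx => by rw [hρ e i hi x hx, hρt e i hi x hx, isPwConst_Dx hℓ m e i hi x hx])
      fun i hi => ((hm.1.isQuadraticOn hi).continuousOn).prodMk (hmt e i hi)
  calc energyRate ℓ γ c ρ m ρt mt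
      = ∑ e, ((∫ x in (0 : ℝ)..ℓ e,
            (1 / ρ e x * mt e x - m e x / (2 * ρ e x ^ 2) * ρt e x) * m e x)
          + ∫ x in (0 : ℝ)..ℓ e, ρt e x * (c e * γ / (γ - 1) * ρ e x ^ (γ - 1))) :=
        Finset.sum_congr rfl fun e _ => integral_add
          (hint e (fun k u => (1 / k.1 * u.2 - u.1 / (2 * k.1 ^ 2) * k.2.1) * u.1) (by fun_prop))
          (hint e (fun k _ => k.2.1 * (c e * γ / (γ - 1) * k.1 ^ (γ - 1))) (by fun_prop))
    _ = ∑ e, ((∫ x in (0 : ℝ)..ℓ e, (m e x ^ 2 / (2 * ρ e x ^ 2)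
            + c e * γ / (γ - 1) * ρ e x ^ (γ - 1) - a e / ρ e x ^ 2 * Dx N ℓ m e x) * Dx N ℓ m e x)
          - (∫ x in (0 : ℝ)..ℓ e, (m e x / (2 * ρ e x ^ 2) * Dx N ℓ m e x
            + b e * |m e x| * m e x / ρ e x ^ 2) * m e x)
          - ∫ x in (0 : ℝ)..ℓ e, Dx N ℓ m e x * (c e * γ / (γ - 1) * ρ e x ^ (γ - 1))) := by
        rw [Finset.sum_add_distrib, hmom, hmass, ← sub_eq_add_neg, ← Finset.sum_sub_distrib,
          ← Finset.sum_sub_distrib]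
    _ = -dissipation N ℓ a b ρ m := by
        rw [dissipation, ← Finset.sum_neg_distrib]
        refine Finset.sum_congr rfl fun e _ => ?_
        have hA := hint e (fun k u => (u.1 ^ 2 / (2 * k.1 ^ 2) + c e * γ / (γ - 1) * k.1 ^ (γ - 1)
          - a e / k.1 ^ 2 * k.2.2) * k.2.2) (by fun_prop)
        have hB := hint e (fun k u => (u.1 / (2 * k.1 ^ 2) * k.2.2
          + b e * |u.1| * u.1 / k.1 ^ 2) * u.1) (by fun_prop)
        have hC := hint e (fun k _ => k.2.2 * (c e * γ / (γ - 1) * k.1 ^ (γ - 1))) (by fun_prop)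
        rw [← intervalIntegral.integral_sub hA hB, ← intervalIntegral.integral_sub (hA.sub hB) hC,
          ← intervalIntegral.integral_neg]
        -- the convective and pressure terms cancel
        refine integral_congr fun x _ => ?_
        have habs : |m e x| ^ 3 = |m e x| * m e x ^ 2 := by rw [pow_succ', sq_abs]
        simp only [habs]
        ring

end SemiDiscEqs

namespace IsSemiDiscSol

variable {V E : Type} [Fintype V] [Fintype E] [DecidableEq V] {src dst : E → V} {N : E → ℕ}
  {ℓ : E → ℝ} {γ : ℝ} {a b c : E → ℝ} {S : Set ℝ} {ρh mh ρht mht : ℝ → E → ℝ → ℝ} {t : ℝ}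

lemma hasDerivWithinAt_totalMass (hsol : IsSemiDiscSol src dst N ℓ γ a b c S ρh mh ρht mht)
    (hN : ∀ e, N e ≠ 0) (hℓ : ∀ e, 0 < ℓ e) (hS : UniqueDiffOn ℝ S) (ht : t ∈ S) :
    HasDerivWithinAt (fun s => totalMass ℓ (ρh s)) 0 S t := by
  obtain ⟨hsp, -, hder, -, -, heqs⟩ := hsol
  rw [← (heqs t ht).totalMass_eq_zero hN hℓ (hsp t ht).2]
  exact _root_.hasDerivWithinAt_totalMass hN hℓ (hS t ht) ht (fun s hs => (hsp s hs).1)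
    fun e x => (hder t ht e x).1

lemma hasDerivWithinAt_energy (hsol : IsSemiDiscSol src dst N ℓ γ a b c S ρh mh ρht mht)
    (hN : ∀ e, N e ≠ 0) (hℓ : ∀ e, 0 < ℓ e) (hS : UniqueDiffOn ℝ S) (ht : t ∈ S) :
    HasDerivWithinAt (fun s => energy ℓ γ c (ρh s) (mh s))
      (-dissipation N ℓ a b (ρh t) (mh t)) S t := by
  obtain ⟨hsp, hpos, hder, -, -, heqs⟩ := hsol
  have hmt : ∀ e, ∀ i < N e, ContinuousOn (mht t e)
      (Icc ((i : ℝ) * ℓ e / N e) ((i + 1) * ℓ e / N e)) := fun e i hi =>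
    (IsQuadraticOn.of_hasDerivWithinAt (mesh_lt (hℓ e) hi) (hS t ht) ht
      (fun s hs => (hsp s hs).2.1.isQuadraticOn hi) fun x _ => (hder t ht e x).2).continuousOn
  rw [← (heqs t ht).energyRate_eq hN hℓ (hsp t ht).1
    (isPwConst_of_hasDerivWithinAt (hS t ht) ht (fun s hs => (hsp s hs).1)
      fun e x => (hder t ht e x).1) (hsp t ht).2 hmt]
  exact _root_.hasDerivWithinAt_energy hN hℓ (hS t ht) ht (fun s hs => (hsp s hs).1)
    (fun s hs => (hsp s hs).2.1) (hpos t ht) (fun e x => (hder t ht e x).1)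
    fun e x => (hder t ht e x).2

end IsSemiDiscSol

theorem semidiscrete_conservation_of_mass_and_energy_general
    {V E : Type} [Fintype V] [Fintype E] [DecidableEq V]
    (src dst : E → V) (N : E → ℕ) (hN : ∀ e, 1 ≤ N e)
    (ℓ : E → ℝ) (hℓ : ∀ e, 0 < ℓ e)
    (γ : ℝ) (a b c : E → ℝ)
    (ha : ∀ e, 0 ≤ a e) (hb : ∀ e, 0 ≤ b e)
    (T : ℝ)
    (ρh mh ρht mht : ℝ → E → ℝ → ℝ)
    (hsol : IsSemiDiscSol src dst N ℓ γ a b c (Set.Icc 0 T) ρh mh ρht mht)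
    (t : ℝ) (ht : t ∈ Set.Icc 0 T) :
    ((∑ e, ∫ x in (0 : ℝ)..(ℓ e), ρh t e x)
        = ∑ e, ∫ x in (0 : ℝ)..(ℓ e), ρh 0 e x) ∧
    ((∑ e, ∫ x in (0 : ℝ)..(ℓ e),
        (mh t e x ^ 2 / (2 * ρh t e x) + c e * ρh t e x ^ γ / (γ - 1)))
      + (∫ s in (0 : ℝ)..t, ∑ e, ∫ x in (0 : ℝ)..(ℓ e),
          (a e * Dx N ℓ (mh s) e x ^ 2 / ρh s e x ^ 2
            + b e * |mh s e x| ^ 3 / ρh s e x ^ 2))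
      = ∑ e, ∫ x in (0 : ℝ)..(ℓ e),
          (mh 0 e x ^ 2 / (2 * ρh 0 e x) + c e * ρh 0 e x ^ γ / (γ - 1))) := by
  rcases ht.1.eq_or_lt with rfl | ht₀
  · exact ⟨rfl, by simp⟩
  have hS : UniqueDiffOn ℝ (Icc 0 T) := uniqueDiffOn_Icc (ht₀.trans_le ht.2)
  have hN' : ∀ e, N e ≠ 0 := fun e => Nat.one_le_iff_ne_zero.1 (hN e)
  have hmass := fun s (hs : s ∈ Icc 0 T) => hsol.hasDerivWithinAt_totalMass hN' hℓ hS hs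
  have henergy := fun s (hs : s ∈ Icc 0 t) =>
    (hsol.hasDerivWithinAt_energy hN' hℓ hS (Icc_subset_Icc_right ht.2 hs)).neg.mono
      (Icc_subset_Icc_right ht.2)
  refine ⟨constant_of_derivWithin_zero (fun s hs => (hmass s hs).differentiableWithinAt)
    (fun s hs => (hmass s (Ico_subset_Icc_self hs)).derivWithin (hS s (Ico_subset_Icc_self hs)))
    t ht, ?_⟩
  have hbalance := integral_eq_sub_of_hasDerivWithinAt_of_nonneg ht.1 (fun s hs => by
    simpa only [neg_neg] using henergy s hs) fun s _ => dissipation_nonneg ha hb hℓ _ _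
  simp only [energy, dissipation, Pi.neg_apply] at hbalance
  linarith

/-- **Conservation of mass and uniform energy bounds for the semi-discretization
(Lemma 4.4).**  Let `(ρh, mh)` be a semi-discrete solution on `[0,T]` with initial data
`(ρh 0, mh 0)`.  Then for every `t ∈ [0,T]`:
`Σ_e ∫_0^{ℓ_e} ρ_h(t) dx = Σ_e ∫_0^{ℓ_e} ρ_h(0) dx`, and
`Σ_e ∫_0^{ℓ_e} ( m_h(t)²/(2ρ_h(t)) + P(ρ_h(t)) ) dx
   + ∫_0^t Σ_e ∫_0^{ℓ_e} ( a_e |∂ₓ m_h(s)|²/ρ_h(s)² + b_e |m_h(s)|³/ρ_h(s)² ) dx ds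
 = Σ_e ∫_0^{ℓ_e} ( m_h(0)²/(2ρ_h(0)) + P(ρ_h(0)) ) dx`,
with `P_e(ρ) = c_e ρ^γ/(γ-1)` on edge `e`. -/
theorem semidiscrete_conservation_of_mass_and_energy
    {V E : Type} [Fintype V] [Fintype E] [DecidableEq V]
    (src dst : E → V) (N : E → ℕ) (hN : ∀ e, 1 ≤ N e)
    (ℓ : E → ℝ) (hℓ : ∀ e, 0 < ℓ e)
    (γ : ℝ) (hγ : 1 < γ) (a b c : E → ℝ)
    (ha : ∀ e, 0 ≤ a e) (hb : ∀ e, 0 ≤ b e) (hc : ∀ e, 0 < c e)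
    (T : ℝ) (hT : 0 ≤ T)
    (ρh mh ρht mht : ℝ → E → ℝ → ℝ)
    (hsol : IsSemiDiscSol src dst N ℓ γ a b c (Set.Icc 0 T) ρh mh ρht mht)
    (t : ℝ) (ht : t ∈ Set.Icc 0 T) :
    ((∑ e, ∫ x in (0 : ℝ)..(ℓ e), ρh t e x)
        = ∑ e, ∫ x in (0 : ℝ)..(ℓ e), ρh 0 e x) ∧
    ((∑ e, ∫ x in (0 : ℝ)..(ℓ e),
        (mh t e x ^ 2 / (2 * ρh t e x) + c e * ρh t e x ^ γ / (γ - 1)))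
      + (∫ s in (0 : ℝ)..t, ∑ e, ∫ x in (0 : ℝ)..(ℓ e),
          (a e * Dx N ℓ (mh s) e x ^ 2 / ρh s e x ^ 2
            + b e * |mh s e x| ^ 3 / ρh s e x ^ 2))
      = ∑ e, ∫ x in (0 : ℝ)..(ℓ e),
          (mh 0 e x ^ 2 / (2 * ρh 0 e x) + c e * ρh 0 e x ^ γ / (γ - 1))) :=
  semidiscrete_conservation_of_mass_and_energy_general src dst N hN ℓ hℓ γ a b c ha hb T ρh mh ρht
    mht hsol t ht
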